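/- For any integers r₁, r₂ ≥ 1, any graph G, and any linear ordering ≺ of V(G), if H is a subgraph of G^{[≺,r₁]}, then H^{[≺,r₂]} (formed using the ordering ≺ restricted to V(H)) is a subgraph of G^{[≺,r₁r₂]}. -/

import Mathlib

/-- The set of vertices `(≺, m)`-reachable from `v`: endpoints `u` of paths from `v`
of length at most `m` all of whose vertices are `≥ u`. -/
def reachSet {V : Type*} [LinearOrder V] (G : SimpleGraph V) (m : ℕ) (v : V) : Set V :=
  {u | ∃ p : G.Walk v u, p.IsPath ∧ p.length ≤ m ∧ ∀ x ∈ p.support, u ≤ x}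

/-- The graph `G^{[≺,m]}` on `V(G)`, with an edge `uv` whenever `u ∈ L^≺_m(v)`. -/
def wreach {V : Type*} [LinearOrder V] (G : SimpleGraph V) (m : ℕ) : SimpleGraph V where
  Adj u v := u ≠ v ∧ (u ∈ reachSet G m v ∨ v ∈ reachSet G m u)
  symm := ⟨fun u v h => ⟨h.1.symm, h.2.symm⟩⟩
  loopless := ⟨fun v h => h.1 rfl⟩

/-- The restriction of a graph to a set of vertices (keeping the ambient vertex type,
with all edges meeting the complement removed). -/
def restrictTo {V : Type*} (G : SimpleGraph V) (S : Set V) : SimpleGraph V where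
  Adj u v := G.Adj u v ∧ u ∈ S ∧ v ∈ S
  symm := ⟨fun u v h => ⟨h.1.symm, h.2.2, h.2.1⟩⟩
  loopless := ⟨fun v h => G.loopless.irrefl v h.1⟩

/-!
Each edge `ab` of `H ≤ G^{[≺,r₁]}` is realised in `G` by a walk of length at most `r₁` through
vertices `⪰ min a b`. Replacing every edge of an `H`-path that witnesses `u ∈ L^≺_{r₂}(v)` by such
a walk gives a `G`-walk of length at most `r₁ r₂` staying `⪰ u`, and shortcutting it to a path
(`Walk.bypass`) preserves both bounds.
-/

open SimpleGraph

section

variable {V : Type*} [LinearOrder V] {G H : SimpleGraph V}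

lemma mem_reachSet_of_walk {m : ℕ} {u v : V} (q : G.Walk v u) (hlen : q.length ≤ m)
    (hsupp : ∀ x ∈ q.support, u ≤ x) : u ∈ reachSet G m v :=
  ⟨q.bypass, q.bypass_isPath, q.length_bypass_le_length.trans hlen,
    fun x hx => hsupp x (q.support_bypass_subset_support hx)⟩

lemma exists_walk_of_wreach_adj {r : ℕ} {a b : V} (h : (wreach G r).Adj a b) :
    ∃ q : G.Walk a b, q.length ≤ r ∧ ∀ x ∈ q.support, min a b ≤ x := by
  rcases h.2 with ⟨p, -, hlen, hsupp⟩ | ⟨p, -, hlen, hsupp⟩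
  · exact ⟨p.reverse, by simpa using hlen,
      fun x hx => (min_le_left a b).trans (hsupp x (by simpa using hx))⟩
  · exact ⟨p, hlen, fun x hx => (min_le_right a b).trans (hsupp x hx)⟩

lemma exists_walk_of_le_wreach {r : ℕ} (hH : H ≤ wreach G r) {c a b : V} (p : H.Walk a b)
    (hp : ∀ x ∈ p.support, c ≤ x) :
    ∃ q : G.Walk a b, q.length ≤ r * p.length ∧ ∀ x ∈ q.support, c ≤ x := by
  induction p with
  | nil => exact ⟨Walk.nil, by simp, by simpa using hp⟩
  | @cons a x b hax p ih =>
    have hca : c ≤ a := hp a (by simp)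
    have hcx : c ≤ x := hp x (by simp)
    obtain ⟨q₁, hlen₁, hsupp₁⟩ := exists_walk_of_wreach_adj (hH hax)
    obtain ⟨q₂, hlen₂, hsupp₂⟩ := ih fun y hy => hp y (by simp [hy])
    refine ⟨q₁.append q₂, ?_, fun y hy => ?_⟩
    · rw [Walk.length_append, Walk.length_cons, Nat.mul_succ]
      omega
    · rcases (Walk.mem_support_append_iff _ _).mp hy with hy | hy
      · exact (le_min hca hcx).trans (hsupp₁ y hy)
      · exact hsupp₂ y hy

lemma reachSet_subset_of_le_wreach {r₁ r₂ : ℕ} (hH : H ≤ wreach G r₁) (v : V) :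
    reachSet H r₂ v ⊆ reachSet G (r₁ * r₂) v := by
  rintro u ⟨p, -, hlen, hsupp⟩
  obtain ⟨q, hqlen, hqsupp⟩ := exists_walk_of_le_wreach hH p hsupp
  exact mem_reachSet_of_walk q (hqlen.trans (Nat.mul_le_mul_left r₁ hlen)) hqsupp

end

theorem wreach_subgraph_trans_general {V : Type*} [LinearOrder V] (G H : SimpleGraph V)
    (r₁ r₂ : ℕ) (hH : H ≤ wreach G r₁) :
    wreach H r₂ ≤ wreach G (r₁ * r₂) := fun u v h =>
  ⟨h.1, h.2.imp (fun hu => reachSet_subset_of_le_wreach hH v hu)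
    (fun hv => reachSet_subset_of_le_wreach hH u hv)⟩

theorem wreach_subgraph_trans {V : Type*} [LinearOrder V] (G H : SimpleGraph V)
    (r₁ r₂ : ℕ) (hr₁ : 1 ≤ r₁) (hr₂ : 1 ≤ r₂) (hH : H ≤ wreach G r₁) :
    wreach H r₂ ≤ wreach G (r₁ * r₂) :=
  wreach_subgraph_trans_general G H r₁ r₂ hH
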